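/- arXiv:1804.01575 — 4 statements merged into one kernel-verified Lean document; each statement's English description precedes it below -/
import Mathlib

section
/- Let F(t) = 1/(1+e^{-t}) denote the logistic function. Fix n, d, m ∈ ℕ, labeled data x_1,…,x_n ∈ ℝ^d with responses y_1,…,y_n ∈ ℝ, guidance instances z_1,…,z_m ∈ ℝ^d, interval endpoints a_1 < b_1, …, a_m < b_m in ℝ, and regularization parameters λ₁ ≥ 0, λ₂ ≥ 0. Then the Range-guidance objective J(w) = Σ_{i=1}^n (⟨x_i, w⟩ − y_i)² + λ₁‖w‖² − λ₂ Σ_{i=1}^m log( F(b_i − ⟨z_i, w⟩) − F(a_i − ⟨z_i, w⟩) ) is a convex function of w on ℝ^d. -/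
/-!
Writing `σ` for the logistic function,
`σ (b - s) - σ (a - s) = eˢ (eᵇ - eᵃ) / ((eˢ + eᵃ) (eˢ + eᵇ))`, so its logarithm is
`s + log (eᵇ - eᵃ) - log (eˢ + eᵃ) - log (eˢ + eᵇ)`: a linear function minus two shifted
softplus functions, hence concave in `s`. Composed with `w ↦ ⟪z, w⟫` it stays concave, and the
objective is a nonnegative combination of convex squares, `‖w‖²` and these negated concave terms.
-/

open Real Set

noncomputable def logistic (t : ℝ) : ℝ := 1 / (1 + exp (-t))

theorem logistic_sub_logistic (a b s : ℝ) :
    logistic (b - s) - logistic (a - s) =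
      exp s * (exp b - exp a) / ((exp s + exp a) * (exp s + exp b)) := by
  have hsa : exp s + exp a ≠ 0 := by positivity
  have hsb : exp s + exp b ≠ 0 := by positivity
  simp only [logistic, neg_sub, exp_sub]
  field_simp
  ring

theorem log_logistic_sub_logistic {a b : ℝ} (hab : a < b) (s : ℝ) :
    log (logistic (b - s) - logistic (a - s)) =
      s + log (exp b - exp a) - log (exp s + exp a) - log (exp s + exp b) := by
  have hba : 0 < exp b - exp a := sub_pos.2 (exp_lt_exp.2 hab)
  have hsa : 0 < exp s + exp a := by positivity
  have hsb : 0 < exp s + exp b := by positivity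
  rw [logistic_sub_logistic, log_div (by positivity) (by positivity),
    log_mul (exp_ne_zero s) hba.ne', log_mul hsa.ne' hsb.ne', log_exp]
  ring

theorem convexOn_log_exp_add {c : ℝ} (hc : 0 ≤ c) :
    ConvexOn ℝ univ fun s => log (exp s + c) := by
  have hpos (s : ℝ) : 0 < exp s + c := by positivity
  have hderiv (s : ℝ) : HasDerivAt (fun s => log (exp s + c)) (exp s / (exp s + c)) s :=
    ((hasDerivAt_exp s).add_const c).log (hpos s).ne'
  refine Monotone.convexOn_univ_of_deriv (fun s => (hderiv s).differentiableAt) ?_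
  rw [funext fun s => (hderiv s).deriv]
  intro s t hst
  rw [div_le_div_iff₀ (hpos s) (hpos t)]
  nlinarith [exp_le_exp.2 hst]

theorem concaveOn_log_logistic_sub_logistic {a b : ℝ} (hab : a < b) :
    ConcaveOn ℝ univ fun s => log (logistic (b - s) - logistic (a - s)) := by
  rw [funext (log_logistic_sub_logistic hab)]
  exact (((concaveOn_id convex_univ).add_const _).sub
    (convexOn_log_exp_add (exp_pos a).le)).sub (convexOn_log_exp_add (exp_pos b).le)

section Finset

variable {𝕜 E β ι : Type*} [Semiring 𝕜] [PartialOrder 𝕜] [AddCommMonoid E] [Module 𝕜 E]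
  [AddCommMonoid β] [PartialOrder β] [IsOrderedAddMonoid β] [Module 𝕜 β]
  {s : Set E} {t : Finset ι} {f : ι → E → β}

theorem convexOn_finset_sum (hs : Convex 𝕜 s) (hf : ∀ i ∈ t, ConvexOn 𝕜 s (f i)) :
    ConvexOn 𝕜 s fun x => ∑ i ∈ t, f i x := by
  classical
  induction t using Finset.induction_on with
  | empty => simpa using convexOn_const (0 : β) hs
  | insert i t hi ih =>
    simp only [Finset.sum_insert hi]
    exact (hf i (t.mem_insert_self i)).add (ih fun j hj => hf j (Finset.mem_insert_of_mem hj))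

theorem concaveOn_finset_sum (hs : Convex 𝕜 s) (hf : ∀ i ∈ t, ConcaveOn 𝕜 s (f i)) :
    ConcaveOn 𝕜 s fun x => ∑ i ∈ t, f i x :=
  convexOn_finset_sum (β := βᵒᵈ) hs fun i hi => (hf i hi).dual

end Finset

section InnerProduct

variable {E : Type*} [NormedAddCommGroup E] [InnerProductSpace ℝ E] {g : ℝ → ℝ}

theorem ConvexOn.comp_inner (hg : ConvexOn ℝ univ g) (v : E) :
    ConvexOn ℝ univ fun w => g (inner ℝ v w) :=
  hg.comp_linearMap (innerₛₗ ℝ v)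

theorem ConcaveOn.comp_inner (hg : ConcaveOn ℝ univ g) (v : E) :
    ConcaveOn ℝ univ fun w => g (inner ℝ v w) :=
  hg.comp_linearMap (innerₛₗ ℝ v)

end InnerProduct

theorem convexOn_sub_sq (c : ℝ) : ConvexOn ℝ univ fun t : ℝ => (t - c) ^ 2 := by
  simpa [Function.comp_def, sub_eq_neg_add] using
    (Even.convexOn_pow (𝕜 := ℝ) even_two).translate_right (-c)

/-- convexity of the Range-guidance objective. -/
theorem range_guidance_objective_convex
    (n d m : ℕ)
    (x : Fin n → EuclideanSpace ℝ (Fin d)) (y : Fin n → ℝ)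
    (z : Fin m → EuclideanSpace ℝ (Fin d)) (a b : Fin m → ℝ)
    (hab : ∀ i, a i < b i)
    (lam1 lam2 : ℝ) (hlam1 : 0 ≤ lam1) (hlam2 : 0 ≤ lam2)
    (F : ℝ → ℝ) (hF : ∀ t, F t = 1 / (1 + Real.exp (-t))) :
    ConvexOn ℝ Set.univ (fun w : EuclideanSpace ℝ (Fin d) =>
      (∑ i, ((inner ℝ (x i) w : ℝ) - y i) ^ 2) + lam1 * ‖w‖ ^ 2
        - lam2 * ∑ i, Real.log (F (b i - (inner ℝ (z i) w : ℝ))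
            - F (a i - (inner ℝ (z i) w : ℝ)))) := by
  obtain rfl : F = logistic := funext hF
  have hfit : ConvexOn ℝ univ fun w : EuclideanSpace ℝ (Fin d) =>
      ∑ i, ((inner ℝ (x i) w : ℝ) - y i) ^ 2 :=
    convexOn_finset_sum convex_univ fun i _ => (convexOn_sub_sq (y i)).comp_inner (x i)
  have hridge : ConvexOn ℝ univ fun w : EuclideanSpace ℝ (Fin d) => lam1 * ‖w‖ ^ 2 :=
    ((convexOn_norm convex_univ).pow (fun _ _ => norm_nonneg _) 2).smul hlam1
  have hguide : ConcaveOn ℝ univ fun w : EuclideanSpace ℝ (Fin d) =>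
      lam2 * ∑ i, log (logistic (b i - inner ℝ (z i) w) - logistic (a i - inner ℝ (z i) w)) :=
    (concaveOn_finset_sum convex_univ fun i _ =>
      (concaveOn_log_logistic_sub_logistic (hab i)).comp_inner (z i)).smul hlam2
  exact (hfit.add hridge).sub hguide
end

section
/- Let F(t) = 1/(1+e^{-t}) denote the logistic function. Let a, b : ℝ^d → ℝ be affine functions with the same linear part, i.e., a(w) = ⟨c, w⟩ + α and b(w) = ⟨c, w⟩ + β for some c ∈ ℝ^d and α > β in ℝ. Then the function w ↦ log( F(a(w)) − F(b(w)) ) is concave on ℝ^d. -/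
open Real

/-!
With `σ = sigmoid`, `σ u - σ v = (exp (-v) - exp (-u)) σ u σ v`, so for `β < α`
`log (σ (x + α) - σ (x + β)) = log (exp (-β) - exp (-α)) - x + log σ (x + α) + log σ (x + β)`.
Each term is concave in `x`, since `(log σ)' = 1 - σ` is decreasing, and `w ↦ ⟪c, w⟫`
is linear.
-/

namespace Real

lemma hasDerivAt_log_sigmoid (x : ℝ) : HasDerivAt (fun x => log (sigmoid x)) (1 - sigmoid x) x := by
  convert (hasDerivAt_sigmoid x).log (sigmoid_pos x).ne' using 1
  field_simp [(sigmoid_pos x).ne']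

lemma concaveOn_log_sigmoid : ConcaveOn ℝ Set.univ (fun x => log (sigmoid x)) := by
  refine Antitone.concaveOn_univ_of_deriv (fun x => (hasDerivAt_log_sigmoid x).differentiableAt) ?_
  rw [funext fun x => (hasDerivAt_log_sigmoid x).deriv]
  exact fun x y hxy => sub_le_sub_left (sigmoid_monotone hxy) 1

lemma sigmoid_sub_sigmoid (u v : ℝ) :
    sigmoid u - sigmoid v = (exp (-v) - exp (-u)) * sigmoid u * sigmoid v := by
  simp only [sigmoid_def]
  field_simp
  ring

lemma log_sigmoid_add_sub_sigmoid_add {α β : ℝ} (hβα : β < α) (x : ℝ) :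
    log (sigmoid (x + α) - sigmoid (x + β)) =
      log (exp (-β) - exp (-α)) - x + log (sigmoid (x + α)) + log (sigmoid (x + β)) := by
  have hexp : 0 < exp (-β) - exp (-α) := sub_pos.mpr (exp_lt_exp.mpr (neg_lt_neg hβα))
  have hfactor : exp (-(x + β)) - exp (-(x + α)) = exp (-x) * (exp (-β) - exp (-α)) := by
    rw [neg_add, neg_add, exp_add, exp_add]; ring
  have hσα := sigmoid_pos (x + α)
  have hσβ := sigmoid_pos (x + β)
  rw [sigmoid_sub_sigmoid, hfactor, log_mul, log_mul, log_mul, log_exp]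
  · ring
  all_goals positivity

lemma concaveOn_log_sigmoid_add_sub_sigmoid_add {α β : ℝ} (hβα : β < α) :
    ConcaveOn ℝ Set.univ (fun x => log (sigmoid (x + α) - sigmoid (x + β))) := by
  have hlin : ConcaveOn ℝ Set.univ (fun x : ℝ => log (exp (-β) - exp (-α)) - x) :=
    (concaveOn_const _ convex_univ).sub (convexOn_id convex_univ)
  have hα := concaveOn_log_sigmoid.translate_left α
  have hβ := concaveOn_log_sigmoid.translate_left β
  simp only [Set.preimage_univ] at hα hβ
  rw [funext (log_sigmoid_add_sub_sigmoid_add hβα)]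
  exact (hlin.add hα).add hβ

end Real

/-- log-concavity of F ∘ a − F ∘ b for affine a, b with the same
linear part. -/
theorem log_diff_logistic_affine_concave
    (d : ℕ) (c : EuclideanSpace ℝ (Fin d)) (α β : ℝ) (hαβ : β < α)
    (F : ℝ → ℝ) (hF : ∀ t, F t = 1 / (1 + Real.exp (-t)))
    (a b : EuclideanSpace ℝ (Fin d) → ℝ)
    (ha : ∀ w, a w = (inner ℝ c w : ℝ) + α)
    (hb : ∀ w, b w = (inner ℝ c w : ℝ) + β) :
    ConcaveOn ℝ Set.univ (fun w => Real.log (F (a w) - F (b w))) := by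
  have hF_sigmoid : F = sigmoid := funext fun t => by rw [hF, one_div, sigmoid_def]
  have h := (concaveOn_log_sigmoid_add_sub_sigmoid_add hαβ).comp_linearMap (innerₛₗ ℝ c)
  simpa [hF_sigmoid, ha, hb, Function.comp_def] using h
end

section
/- Let F(t) = 1/(1+e^{-t}) denote the logistic function and let α > β be real numbers. Then the function f : ℝ → ℝ defined by f(x) = F(x + α) − F(x + β) is strictly positive and log-concave on ℝ, i.e., x ↦ log(F(x + α) − F(x + β)) is concave on ℝ. -/
open Real

lemma softplus_hasDerivAt (c x : ℝ) :
    HasDerivAt (fun x => Real.log (1 + Real.exp (x + c)))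
      (Real.exp (x + c) / (1 + Real.exp (x + c))) x := by
  have h1 : HasDerivAt (fun x : ℝ => 1 + Real.exp (x + c)) (Real.exp (x + c)) x := by
    have := (Real.hasDerivAt_exp (x + c)).comp x ((hasDerivAt_id x).add_const c)
    simpa using (this.const_add 1)
  exact h1.log (by positivity)

lemma softplus_convex (c : ℝ) :
    ConvexOn ℝ Set.univ (fun x => Real.log (1 + Real.exp (x + c))) := by
  have hdiff : Differentiable ℝ (fun x => Real.log (1 + Real.exp (x + c))) :=
    fun x => (softplus_hasDerivAt c x).differentiableAt
  apply Monotone.convexOn_univ_of_deriv hdiff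
  have hderiv : deriv (fun x => Real.log (1 + Real.exp (x + c)))
      = fun x => Real.exp (x + c) / (1 + Real.exp (x + c)) :=
    funext fun x => (softplus_hasDerivAt c x).deriv
  rw [hderiv]
  intro a b hab
  have ha : (0:ℝ) < 1 + Real.exp (a + c) := by positivity
  have hb : (0:ℝ) < 1 + Real.exp (b + c) := by positivity
  rw [div_le_div_iff₀ ha hb]
  have : Real.exp (a + c) ≤ Real.exp (b + c) := Real.exp_le_exp.2 (by linarith)
  nlinarith [Real.exp_pos (a + c), Real.exp_pos (b + c)]

/-- the shifted difference of logistic CDFs is strictly positive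
and log-concave. -/
theorem logistic_cdf_diff_pos_and_log_concave
    (α β : ℝ) (hαβ : β < α)
    (F : ℝ → ℝ) (hF : ∀ t, F t = 1 / (1 + Real.exp (-t)))
    (f : ℝ → ℝ) (hf : ∀ x, f x = F (x + α) - F (x + β)) :
    (∀ x, 0 < f x) ∧
      ConcaveOn ℝ Set.univ (fun x => Real.log (F (x + α) - F (x + β))) := by
  have hFalt : ∀ t, F t = Real.exp t / (1 + Real.exp t) := by
    intro t
    rw [hF, Real.exp_neg]
    have := Real.exp_pos t
    field_simp
    ring
  have key : ∀ x, F (x + α) - F (x + β)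
      = Real.exp x * (Real.exp α - Real.exp β)
        / ((1 + Real.exp (x + α)) * (1 + Real.exp (x + β))) := by
    intro x
    rw [hFalt, hFalt, Real.exp_add, Real.exp_add]
    have h1 : (0:ℝ) < 1 + Real.exp x * Real.exp α := by positivity
    have h2 : (0:ℝ) < 1 + Real.exp x * Real.exp β := by positivity
    field_simp
    ring
  have hpos : ∀ x, 0 < F (x + α) - F (x + β) := by
    intro x
    rw [key]
    have h1 : Real.exp β < Real.exp α := Real.exp_lt_exp.2 hαβ
    have h2 : (0:ℝ) < (1 + Real.exp (x + α)) * (1 + Real.exp (x + β)) := by positivity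
    have h3 : 0 < Real.exp x * (Real.exp α - Real.exp β) := by
      have := Real.exp_pos x; nlinarith
    exact div_pos h3 h2
  refine ⟨fun x => by rw [hf]; exact hpos x, ?_⟩
  have hdα : Real.exp β < Real.exp α := Real.exp_lt_exp.2 hαβ
  have heq : (fun x => Real.log (F (x + α) - F (x + β)))
      = fun x => (Real.log (Real.exp α - Real.exp β) + x)
        - Real.log (1 + Real.exp (x + α)) - Real.log (1 + Real.exp (x + β)) := by
    funext x
    rw [key x]
    have hnum : (0:ℝ) < Real.exp x * (Real.exp α - Real.exp β) := by
      have := Real.exp_pos x; nlinarith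
    rw [Real.log_div hnum.ne' (by positivity), Real.log_mul (Real.exp_pos x).ne'
      (by nlinarith), Real.log_mul (by positivity) (by positivity), Real.log_exp]
    ring
  rw [heq]
  have hlin : ConcaveOn ℝ Set.univ
      (fun x : ℝ => Real.log (Real.exp α - Real.exp β) + x) := by
    apply ConcaveOn.add (concaveOn_const _ convex_univ)
    exact (LinearMap.id : ℝ →ₗ[ℝ] ℝ).concaveOn convex_univ
  exact ((hlin.sub (softplus_convex α)).sub (softplus_convex β))
end

section
/- For all real numbers u, v with 0 ≤ u ≤ 1 and 0 ≤ v ≤ 1, the following inequality holds: (u − v) · ( u(1−u)(1−2u) − v(1−v)(1−2v) ) ≤ ( u(1−u) − v(1−v) )². -/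
/-- the key inequality f·f'' ≤ (f')² for logistic CDF values. -/
theorem key_logistic_inequality (u v : ℝ)
    (hu0 : 0 ≤ u) (hu1 : u ≤ 1) (hv0 : 0 ≤ v) (hv1 : v ≤ 1) :
    (u - v) * (u * (1 - u) * (1 - 2 * u) - v * (1 - v) * (1 - 2 * v))
      ≤ (u * (1 - u) - v * (1 - v)) ^ 2 := by
  have h : 0 ≤ (u - v) ^ 2 * (u * (1 - u) + v * (1 - v)) :=
    mul_nonneg (sq_nonneg _) (add_nonneg
      (mul_nonneg hu0 (by linarith)) (mul_nonneg hv0 (by linarith)))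
  nlinarith [h]
end
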